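/- Let λ > 0 and let q : ℝ → Quaternion ℝ be differentiable with ‖q(t)‖ = 1 for all t and satisfy q'(t) = (1/2) · q(t) * ⟦−λ · q⃗(t)⟧ (i.e., the sliding feedback with the sgn₊ factor omitted). Then d/dt ‖q⃗(t)‖² = −λ · q°(t) · ‖q⃗(t)‖². In particular, whenever q°(t) < 0 and q⃗(t) ≠ 0, ‖q⃗‖² is strictly increasing, so the identity quaternion representative with negative real part is repelling and the unwinding phenomenon occurs. -/

import Mathlib

/-! Along `q' = ½ q ⟦-λ q⃗⟧` the vector part obeys `q⃗' = -(λ/2) q° q⃗`, because `q⃗ q⃗ = -‖q⃗‖²`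
is real; hence `‖q⃗‖²' = 2⟪q⃗, q⃗'⟫ = -λ q° ‖q⃗‖²`, which is positive where `q° < 0` and `q⃗ ≠ 0`. -/

noncomputable section

/-- The vector (imaginary) part of a quaternion, as a vector in Euclidean `ℝ³`. -/
def vecPart (p : Quaternion ℝ) : EuclideanSpace ℝ (Fin 3) := WithLp.toLp 2 ![p.imI, p.imJ, p.imK]

/-- The pure-imaginary quaternion `⟦v⟧` with vector part `v`. -/
def quatOfVec (v : EuclideanSpace ℝ (Fin 3)) : Quaternion ℝ := ⟨0, v 0, v 1, v 2⟩

def vecPartL : Quaternion ℝ →L[ℝ] EuclideanSpace ℝ (Fin 3) :=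
  LinearMap.toContinuousLinearMap
    { toFun := vecPart
      map_add' := fun p r => by ext i; fin_cases i <;> simp [vecPart]
      map_smul' := fun c p => by ext i; fin_cases i <;> simp [vecPart] }

lemma vecPart_smul (c : ℝ) (p : Quaternion ℝ) : vecPart (c • p) = c • vecPart p :=
  vecPartL.map_smul c p

lemma vecPart_mul_quatOfVec_smul_vecPart (p : Quaternion ℝ) (c : ℝ) :
    vecPart (p * quatOfVec (c • vecPart p)) = (c * p.re) • vecPart p := by
  ext i
  fin_cases i <;> simp [vecPart, Quaternion.imI_mul, Quaternion.imJ_mul, Quaternion.imK_mul] <;>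
    simp [quatOfVec] <;> ring

lemma hasDerivAt_norm_vecPart_sq {q : ℝ → Quaternion ℝ} {q' : Quaternion ℝ} {t : ℝ}
    (hq : HasDerivAt q q' t) :
    HasDerivAt (fun τ => ‖vecPart (q τ)‖ ^ 2)
      (2 * inner ℝ (vecPart (q t)) (vecPart q')) t :=
  (vecPartL.hasFDerivAt.comp_hasDerivAt t hq).norm_sq

theorem unwinding_without_sgnPlus_general
    (lam : ℝ) (hlam : 0 < lam) (q : ℝ → Quaternion ℝ)
    (hq : Differentiable ℝ q)
    (hdyn : ∀ t : ℝ, deriv q t =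
      (1 / 2 : ℝ) • (q t * quatOfVec ((-lam) • vecPart (q t)))) :
    (∀ t : ℝ, HasDerivAt (fun τ => ‖vecPart (q τ)‖ ^ 2)
        (-(lam * (q t).re * ‖vecPart (q t)‖ ^ 2)) t) ∧
      ∀ t : ℝ, (q t).re < 0 → vecPart (q t) ≠ 0 →
        0 < deriv (fun τ => ‖vecPart (q τ)‖ ^ 2) t := by
  have hnormSq : ∀ t : ℝ, HasDerivAt (fun τ => ‖vecPart (q τ)‖ ^ 2)
      (-(lam * (q t).re * ‖vecPart (q t)‖ ^ 2)) t := by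
    intro t
    convert hasDerivAt_norm_vecPart_sq (hq t).hasDerivAt using 1
    rw [hdyn t, vecPart_smul, vecPart_mul_quatOfVec_smul_vecPart, smul_smul,
      real_inner_smul_right, real_inner_self_eq_norm_sq]
    ring
  refine ⟨hnormSq, fun t hre hvec => ?_⟩
  rw [(hnormSq t).deriv, neg_pos]
  exact mul_neg_of_neg_of_pos (mul_neg_of_pos_of_neg hlam hre) (pow_pos (norm_pos_iff.2 hvec) 2)

theorem unwinding_without_sgnPlus
    (lam : ℝ) (hlam : 0 < lam) (q : ℝ → Quaternion ℝ)
    (hq : Differentiable ℝ q)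
    (hunit : ∀ t : ℝ, ‖q t‖ = 1)
    (hdyn : ∀ t : ℝ, deriv q t =
      (1 / 2 : ℝ) • (q t * quatOfVec ((-lam) • vecPart (q t)))) :
    (∀ t : ℝ, HasDerivAt (fun τ => ‖vecPart (q τ)‖ ^ 2)
        (-(lam * (q t).re * ‖vecPart (q t)‖ ^ 2)) t) ∧
      ∀ t : ℝ, (q t).re < 0 → vecPart (q t) ≠ 0 →
        0 < deriv (fun τ => ‖vecPart (q τ)‖ ^ 2) t :=
  unwinding_without_sgnPlus_general lam hlam q hq hdyn
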